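/- arXiv:2506.11572 — 3 statements merged into one kernel-verified Lean document; each statement's English description precedes it below -/
import Mathlib

section
/- For n×n complex matrices A and B and t ≥ 0, the Duhamel formula holds: exp(t(A+B)) = exp(tA) + ∫_0^t exp((t-s)(A+B)) B exp(sA) ds. -/
open scoped Matrix.Norms.L2Operator

theorem stmt_5 {n : ℕ} (A B : Matrix (Fin n) (Fin n) ℂ) (t : ℝ) (ht : 0 ≤ t) :
    NormedSpace.exp (t • (A + B)) =
      NormedSpace.exp (t • A) +
        ∫ s in (0:ℝ)..t,
          NormedSpace.exp ((t - s) • (A + B)) * B * NormedSpace.exp (s • A) := by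
  set M := A + B with hM
  set f : ℝ → Matrix (Fin n) (Fin n) ℂ :=
    fun u => NormedSpace.exp ((t - u) • M) * NormedSpace.exp (u • A) with hf
  have key : ∀ s : ℝ, HasDerivAt f
      (-(NormedSpace.exp ((t - s) • M) * B * NormedSpace.exp (s • A))) s := by
    intro s
    have h1 : HasDerivAt (fun u : ℝ => NormedSpace.exp ((t - u) • M))
        ((-1 : ℝ) • (NormedSpace.exp ((t - s) • M) * M)) s := by
      exact (hasDerivAt_exp_smul_const (𝕂 := ℝ) M (t - s)).scomp s
        ((hasDerivAt_id s).const_sub t)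
    have h2 : HasDerivAt (fun u : ℝ => NormedSpace.exp (u • A))
        (A * NormedSpace.exp (s • A)) s :=
      hasDerivAt_exp_smul_const' (𝕂 := ℝ) A s
    have := h1.mul h2
    refine this.congr_deriv ?_
    simp only [neg_smul, one_smul, hM]
    noncomm_ring
  have hcont : Continuous fun s : ℝ =>
      -(NormedSpace.exp ((t - s) • M) * B * NormedSpace.exp (s • A)) := by
    apply Continuous.neg
    letI : NormedAlgebra ℚ (Matrix (Fin n) (Fin n) ℂ) := NormedAlgebra.restrictScalars ℚ ℂ _
    exact ((NormedSpace.exp_continuous.comp ((continuous_const.sub continuous_id).smul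
      continuous_const)).mul continuous_const).mul
      (NormedSpace.exp_continuous.comp (continuous_id.smul continuous_const))
  have hint := intervalIntegral.integral_eq_sub_of_hasDerivAt
    (f := f) (a := (0:ℝ)) (b := t)
    (fun s _ => key s) (hcont.intervalIntegrable 0 t)
  rw [intervalIntegral.integral_neg] at hint
  have hf0 : f 0 = NormedSpace.exp (t • M) := by
    simp [hf, NormedSpace.exp_zero]
  have hft : f t = NormedSpace.exp (t • A) := by
    simp [hf, NormedSpace.exp_zero]
  rw [hf0, hft] at hint
  have hI := neg_eq_iff_eq_neg.mp hint
  rw [hI]; abel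
end

section
/- For n×n complex matrices A and B, t ≥ 0, and any k ≥ 1: exp(t(A+B)) = ∑_{m=0}^{k-1} ∫_{t_0,…,t_m ≥ 0, t_0+⋯+t_m = t} exp(t_m A) B ⋯ B exp(t_1 A) B exp(t_0 A) dt_0⋯dt_{m-1} + R_k, where R_k = ∫_{t_0+⋯+t_k = t} exp(t_k(A+B)) B ⋯ B exp(t_1 A) B exp(t_0 A) dt_0⋯dt_{k-1}, and ‖R_k‖ ≤ (t^k/k!) ‖B‖^k exp(t(‖A‖+‖B‖)). -/
open scoped Matrix.Norms.L2Operator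

/-- The `m`-th term of the Dyson/Duhamel expansion: the integral over the simplex
`{t_0, …, t_{m-1} ≥ 0, t_0 + ⋯ + t_{m-1} ≤ t}` (with `t_m := t - ∑ t_i`) of
`exp(t_m A) B exp(t_{m-1} A) ⋯ B exp(t_0 A)`. -/
noncomputable def dysonTerm {n : ℕ} (A B : Matrix (Fin n) (Fin n) ℂ) (t : ℝ) (m : ℕ) :
    Matrix (Fin n) (Fin n) ℂ :=
  ∫ s in {s : Fin m → ℝ | (∀ i, 0 ≤ s i) ∧ ∑ i, s i ≤ t},
    NormedSpace.exp ((t - ∑ i, s i) • A) *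
      ((List.ofFn fun i : Fin m => B * NormedSpace.exp (s i • A)).reverse.prod)

/-- The remainder of the Dyson/Duhamel expansion at order `k`: the same integral as
`dysonTerm`, but with the leading factor `exp(t_k (A + B))`. -/
noncomputable def dysonRemainder {n : ℕ} (A B : Matrix (Fin n) (Fin n) ℂ) (t : ℝ) (k : ℕ) :
    Matrix (Fin n) (Fin n) ℂ :=
  ∫ s in {s : Fin k → ℝ | (∀ i, 0 ≤ s i) ∧ ∑ i, s i ≤ t},
    NormedSpace.exp ((t - ∑ i, s i) • (A + B)) *
      ((List.ofFn fun i : Fin k => B * NormedSpace.exp (s i • A)).reverse.prod)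

open MeasureTheory

namespace DysonProof

/-- The simplex. -/
def Spx (k : ℕ) (t : ℝ) : Set (Fin k → ℝ) := {s | (∀ i, 0 ≤ s i) ∧ ∑ i, s i ≤ t}

lemma isClosed_Spx (k : ℕ) (t : ℝ) : IsClosed (Spx k t) := by
  have h1 : Spx k t = (⋂ i, {s : Fin k → ℝ | 0 ≤ s i}) ∩ {s | ∑ i, s i ≤ t} := by
    ext s; simp [Spx, Set.mem_iInter]
  rw [h1]
  exact (isClosed_iInter fun i => isClosed_le continuous_const (continuous_apply i)).inter
    (isClosed_le (by continuity) continuous_const)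

lemma isCompact_Spx (k : ℕ) (t : ℝ) : IsCompact (Spx k t) := by
  refine IsCompact.of_isClosed_subset (isCompact_Icc (a := (0 : Fin k → ℝ)) (b := fun _ => t))
    (isClosed_Spx k t) ?_
  rintro s ⟨h0, hsum⟩
  refine Set.mem_Icc.2 ⟨fun i => h0 i, fun i => ?_⟩
  exact le_trans (Finset.single_le_sum (fun j _ => h0 j) (Finset.mem_univ i)) hsum

lemma measurableSet_Spx (k : ℕ) (t : ℝ) : MeasurableSet (Spx k t) :=
  (isClosed_Spx k t).measurableSet

lemma mem_Spx_snoc {k : ℕ} {t : ℝ} {s : Fin k → ℝ} {u : ℝ} :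
    Fin.snoc s u ∈ Spx (k + 1) t ↔ u ∈ Set.Icc 0 t ∧ s ∈ Spx k (t - u) := by
  have hsum : ∑ i : Fin (k + 1), Fin.snoc s u i = (∑ i : Fin k, s i) + u := by
    rw [Fin.sum_univ_castSucc]
    simp [Fin.snoc_castSucc, Fin.snoc_last]
  constructor
  · rintro ⟨h0, hle⟩
    rw [hsum] at hle
    have hu : 0 ≤ u := by simpa using h0 (Fin.last k)
    have hs0 : ∀ i, 0 ≤ s i := fun i => by simpa using h0 i.castSucc
    have hSig : 0 ≤ ∑ i : Fin k, s i := Finset.sum_nonneg fun i _ => hs0 i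
    exact ⟨⟨hu, by linarith⟩, hs0, by linarith⟩
  · rintro ⟨⟨hu0, hut⟩, hs0, hsle⟩
    refine ⟨fun i => ?_, by rw [hsum]; linarith⟩
    refine Fin.lastCases ?_ ?_ i
    · simpa using hu0
    · intro j; simpa using hs0 j

lemma mem_Spx_snoc' {k : ℕ} {t : ℝ} {s : Fin k → ℝ} {u : ℝ} :
    Fin.snoc s u ∈ Spx (k + 1) t ↔ s ∈ Spx k t ∧ u ∈ Set.Icc 0 (t - ∑ i, s i) := by
  rw [mem_Spx_snoc]
  constructor
  · rintro ⟨⟨hu0, hut⟩, hs0, hsle⟩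
    have hSig : 0 ≤ ∑ i : Fin k, s i := Finset.sum_nonneg fun i _ => hs0 i
    exact ⟨⟨hs0, by linarith⟩, hu0, by linarith⟩
  · rintro ⟨⟨hs0, hsle⟩, hu0, hut⟩
    have hSig : 0 ≤ ∑ i : Fin k, s i := Finset.sum_nonneg fun i _ => hs0 i
    exact ⟨⟨hu0, by linarith⟩, hs0, by linarith⟩


section Split
variable {E : Type*} [NormedAddCommGroup E] [NormedSpace ℝ E]

lemma integral_spx_eq_prod (k : ℕ) (t : ℝ) (F : (Fin (k + 1) → ℝ) → E) (hF : Continuous F) :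
    (∫ s in Spx (k + 1) t, F s) =
      ∫ p : ℝ × (Fin k → ℝ), (Spx (k + 1) t).indicator F (Fin.snoc p.2 p.1)
        ∂((volume : Measure ℝ).prod (volume : Measure (Fin k → ℝ))) := by
  have hS := measurableSet_Spx (k + 1) t
  set e := (MeasurableEquiv.piFinSuccAbove (fun _ : Fin (k + 1) => ℝ) (Fin.last k)).symm with he
  have hmp : MeasurePreserving e volume volume :=
    (volume_preserving_piFinSuccAbove (fun _ : Fin (k + 1) => ℝ) (Fin.last k)).symm _
  have key : ∀ p : ℝ × (Fin k → ℝ), e p = Fin.snoc p.2 p.1 := by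
    intro p
    rw [he, MeasurableEquiv.piFinSuccAbove_symm_apply]
    exact Fin.insertNth_last' p.1 p.2
  rw [← integral_indicator hS, ← hmp.integral_comp e.measurableEmbedding]
  rw [← Measure.volume_eq_prod]
  exact integral_congr_ae (Filter.Eventually.of_forall fun p => by dsimp only; rw [key p])

lemma integrable_spx_prod (k : ℕ) (t : ℝ) (F : (Fin (k + 1) → ℝ) → E) (hF : Continuous F) :
    Integrable (fun p : ℝ × (Fin k → ℝ) => (Spx (k + 1) t).indicator F (Fin.snoc p.2 p.1))
      ((volume : Measure ℝ).prod (volume : Measure (Fin k → ℝ))) := by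
  have hS := measurableSet_Spx (k + 1) t
  set e := (MeasurableEquiv.piFinSuccAbove (fun _ : Fin (k + 1) => ℝ) (Fin.last k)).symm with he
  have hmp : MeasurePreserving e volume volume :=
    (volume_preserving_piFinSuccAbove (fun _ : Fin (k + 1) => ℝ) (Fin.last k)).symm _
  have key : ∀ p : ℝ × (Fin k → ℝ), e p = Fin.snoc p.2 p.1 := by
    intro p
    rw [he, MeasurableEquiv.piFinSuccAbove_symm_apply]
    exact Fin.insertNth_last' p.1 p.2
  have hint : Integrable ((Spx (k + 1) t).indicator F ∘ e) volume :=
    (hmp.integrable_comp_emb e.measurableEmbedding).mpr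
      ((integrable_indicator_iff hS).mpr
        (hF.continuousOn.integrableOn_compact (isCompact_Spx (k + 1) t)))
  rw [← Measure.volume_eq_prod]
  exact hint.congr (Filter.Eventually.of_forall fun p => by rw [Function.comp_apply, key p])

/-- Split off the last variable, outer integral over it. -/
lemma split_outer (k : ℕ) (t : ℝ) (F : (Fin (k + 1) → ℝ) → E) (hF : Continuous F) :
    (∫ s in Spx (k + 1) t, F s) =
      ∫ u in Set.Icc 0 t, ∫ s in Spx k (t - u), F (Fin.snoc s u) := by
  rw [integral_spx_eq_prod k t F hF,
    integral_prod _ (integrable_spx_prod k t F hF)]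
  rw [← integral_indicator measurableSet_Icc]
  refine integral_congr_ae (Filter.Eventually.of_forall fun u => ?_)
  by_cases hu : u ∈ Set.Icc 0 t
  · rw [Set.indicator_of_mem hu, ← integral_indicator (measurableSet_Spx k (t - u))]
    refine integral_congr_ae (Filter.Eventually.of_forall fun s => ?_)
    dsimp only
    by_cases hs : s ∈ Spx k (t - u)
    · rw [Set.indicator_of_mem hs, Set.indicator_of_mem (mem_Spx_snoc.mpr ⟨hu, hs⟩)]
    · rw [Set.indicator_of_notMem hs,
        Set.indicator_of_notMem (fun h => hs (mem_Spx_snoc.mp h).2)]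
  · rw [Set.indicator_of_notMem hu]
    have : ∀ s : Fin k → ℝ, (Spx (k + 1) t).indicator F (Fin.snoc s u) = 0 := fun s =>
      Set.indicator_of_notMem (fun h => hu (mem_Spx_snoc.mp h).1) _
    simp [this]

/-- Split off the last variable, inner integral over it. -/
lemma split_inner (k : ℕ) (t : ℝ) (F : (Fin (k + 1) → ℝ) → E) (hF : Continuous F) :
    (∫ s in Spx (k + 1) t, F s) =
      ∫ s in Spx k t, ∫ u in Set.Icc 0 (t - ∑ i, s i), F (Fin.snoc s u) := by
  rw [integral_spx_eq_prod k t F hF,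
    integral_prod_symm _ (integrable_spx_prod k t F hF)]
  rw [← integral_indicator (measurableSet_Spx k t)]
  refine integral_congr_ae (Filter.Eventually.of_forall fun s => ?_)
  by_cases hs : s ∈ Spx k t
  · rw [Set.indicator_of_mem hs, ← integral_indicator measurableSet_Icc]
    refine integral_congr_ae (Filter.Eventually.of_forall fun u => ?_)
    dsimp only
    by_cases hu : u ∈ Set.Icc 0 (t - ∑ i, s i)
    · rw [Set.indicator_of_mem hu, Set.indicator_of_mem (mem_Spx_snoc'.mpr ⟨hs, hu⟩)]
    · rw [Set.indicator_of_notMem hu,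
        Set.indicator_of_notMem (fun h => hu (mem_Spx_snoc'.mp h).2)]
  · rw [Set.indicator_of_notMem hs]
    have : ∀ u : ℝ, (Spx (k + 1) t).indicator F (Fin.snoc s u) = 0 := fun u =>
      Set.indicator_of_notMem (fun h => hs (mem_Spx_snoc'.mp h).1) _
    simp [this]

end Split

variable {N : ℕ}
local notation "Mat" => Matrix (Fin N) (Fin N) ℂ

lemma exp_continuous' : Continuous (NormedSpace.exp : Mat → Mat) :=
  continuous_iff_continuousAt.2 fun x => (NormedSpace.exp_analytic (𝕂 := ℂ) x).continuousAt

lemma norm_one_le' : ‖(1 : Mat)‖ ≤ 1 := by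
  rw [Matrix.cstar_norm_def, map_one]
  rw [show (1 : EuclideanSpace ℂ (Fin N) →L[ℂ] EuclideanSpace ℂ (Fin N)) =
    ContinuousLinearMap.id ℂ _ from rfl]
  exact ContinuousLinearMap.norm_id_le

lemma norm_exp_le (x : Mat) :
    ‖NormedSpace.exp x‖ ≤ Real.exp ‖x‖ := by
  rw [NormedSpace.exp_eq_tsum ℂ]
  refine tsum_of_norm_bounded (Real.exp_eq_exp_ℝ ▸ NormedSpace.expSeries_div_hasSum_exp ‖x‖)
    fun n => ?_
  rw [norm_smul, norm_inv, RCLike.norm_natCast]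
  have hx : ‖x ^ n‖ ≤ ‖x‖ ^ n := by
    cases n with
    | zero => simpa using norm_one_le'
    | succ m => exact norm_pow_le' x m.succ_pos
  have h0 : (0:ℝ) ≤ ((n.factorial : ℝ))⁻¹ := by positivity
  calc ((n.factorial : ℝ))⁻¹ * ‖x ^ n‖ ≤ ((n.factorial : ℝ))⁻¹ * ‖x‖ ^ n :=
        mul_le_mul_of_nonneg_left hx h0
    _ = ‖x‖ ^ n / n.factorial := by ring

/-- volume integral of 1 over the simplex. -/
lemma J_eq (k : ℕ) : ∀ t : ℝ, 0 ≤ t →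
    (∫ _ in Spx k t, (1 : ℝ)) = t ^ k / k.factorial := by
  induction k with
  | zero =>
    intro t ht
    have huniv : Spx 0 t = Set.univ := by
      ext s
      simp [Spx, ht]
    rw [huniv, setIntegral_univ, integral_const, smul_eq_mul, mul_one]
    have : (volume : Measure (Fin 0 → ℝ)) Set.univ = 1 := by
      rw [MeasureTheory.volume_pi, MeasureTheory.Measure.pi_univ]
      simp
    rw [Measure.real, this]
    simp
  | succ k ih =>
    intro t ht
    rw [split_outer k t _ continuous_const]
    have hcong : ∀ u ∈ Set.Icc (0:ℝ) t,
        (∫ _ in Spx k (t - u), (1 : ℝ)) = (t - u) ^ k / k.factorial := fun u hu =>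
      ih (t - u) (by linarith [hu.2])
    rw [setIntegral_congr_fun measurableSet_Icc hcong]
    rw [integral_Icc_eq_integral_Ioc, ← intervalIntegral.integral_of_le ht]
    rw [intervalIntegral.integral_comp_sub_left (fun x => x ^ k / k.factorial) t]
    simp only [sub_self, sub_zero]
    rw [intervalIntegral.integral_div, integral_pow]
    rw [Nat.factorial_succ]
    push_cast
    field_simp
    simp

lemma exp_R_eq (x : Mat) : NormedSpace.exp x = NormedSpace.exp x := by
  rfl

/-- Duhamel formula at first order. -/
lemma duhamel (A B : Mat) (t : ℝ) (ht : 0 ≤ t) :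
    (∫ u in Set.Icc 0 t,
        NormedSpace.exp ((t - u) • (A + B)) * (B * NormedSpace.exp (u • A))) =
      NormedSpace.exp (t • (A + B)) - NormedSpace.exp (t • A) := by
  set M : Mat := A + B with hM
  set g : ℝ → Mat := fun u => NormedSpace.exp ((t - u) • M) * NormedSpace.exp (u • A)
    with hg
  set d : ℝ → Mat := fun u =>
    -(NormedSpace.exp ((t - u) • M) * (B * NormedSpace.exp (u • A))) with hd
  have hderiv : ∀ u : ℝ, HasDerivAt g (d u) u := by
    intro u
    have h1 : HasDerivAt (fun u : ℝ => NormedSpace.exp ((t - u) • M))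
        ((-1 : ℝ) • (NormedSpace.exp ((t - u) • M) * M)) u := by
      have := (hasDerivAt_exp_smul_const (𝕂 := ℝ) M (t - u)).scomp u
        ((hasDerivAt_id u).const_sub t)
      simpa [Function.comp_def] using this
    have h2 : HasDerivAt (fun u : ℝ => NormedSpace.exp (u • A))
        (NormedSpace.exp (u • A) * A) u := hasDerivAt_exp_smul_const A u
    have h := h1.mul h2
    have hcomm : NormedSpace.exp (u • A) * A = A * NormedSpace.exp (u • A) :=
      (((Commute.refl A).smul_left u).exp_left)
    have heq : (-1 : ℝ) • (NormedSpace.exp ((t - u) • M) * M) * NormedSpace.exp (u • A) +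
        NormedSpace.exp ((t - u) • M) * (NormedSpace.exp (u • A) * A) = d u := by
      rw [hcomm, hd, hM]
      simp only [neg_one_smul]
      noncomm_ring
    rw [← heq]
    exact h
  have hcont : Continuous d := by
    have hc1 : Continuous fun u : ℝ => NormedSpace.exp ((t - u) • M) :=
      exp_continuous'.comp ((continuous_const.sub continuous_id).smul continuous_const)
    have hc2 : Continuous fun u : ℝ => NormedSpace.exp (u • A) :=
      exp_continuous'.comp (continuous_id.smul continuous_const)
    exact (hc1.mul (continuous_const.mul hc2)).neg
  have hftc := intervalIntegral.integral_eq_sub_of_hasDerivAt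
    (f := g) (f' := d) (fun u _ => hderiv u) (hcont.intervalIntegrable 0 t)
  have hgt : g t = NormedSpace.exp (t • A) := by
    rw [hg]; simp [NormedSpace.exp_zero]
  have hg0 : g 0 = NormedSpace.exp (t • M) := by
    rw [hg]; simp [NormedSpace.exp_zero]
  rw [hgt, hg0] at hftc
  have : (∫ u in Set.Icc 0 t,
      NormedSpace.exp ((t - u) • M) * (B * NormedSpace.exp (u • A))) =
      ∫ u in (0:ℝ)..t, -(d u) := by
    rw [integral_Icc_eq_integral_Ioc, ← intervalIntegral.integral_of_le ht]
    simp [hd]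
  rw [this, intervalIntegral.integral_neg, hftc]
  abel


/-- the product part of the Dyson integrand -/
noncomputable def lp (A B : Mat) (k : ℕ) (s : Fin k → ℝ) : Mat :=
  (List.ofFn fun i : Fin k => B * NormedSpace.exp (s i • A)).reverse.prod

lemma lp_succ (A B : Mat) (k : ℕ) (s : Fin (k + 1) → ℝ) :
    lp A B (k + 1) s =
      (B * NormedSpace.exp (s (Fin.last k) • A)) * lp A B k (fun i => s i.castSucc) := by
  rw [lp, List.ofFn_succ', List.concat_eq_append, List.reverse_append]
  simp [lp]

lemma lp_snoc (A B : Mat) (k : ℕ) (s : Fin k → ℝ) (u : ℝ) :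
    lp A B (k + 1) (Fin.snoc s u) =
      (B * NormedSpace.exp (u • A)) * lp A B k s := by
  rw [lp_succ]
  simp [Fin.snoc_castSucc, Fin.snoc_last]

lemma continuous_lp (A B : Mat) (k : ℕ) : Continuous (lp A B k) := by
  induction k with
  | zero =>
    have : lp A B 0 = fun _ => 1 := by funext s; simp [lp]
    rw [this]; exact continuous_const
  | succ k ih =>
    have : lp A B (k + 1) = fun s =>
        (B * NormedSpace.exp (s (Fin.last k) • A)) * lp A B k (fun i => s i.castSucc) := by
      funext s; exact lp_succ A B k s
    rw [this]
    refine Continuous.mul ?_ (ih.comp (by fun_prop))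
    exact continuous_const.mul
      (exp_continuous'.comp ((continuous_apply (Fin.last k)).smul continuous_const))

lemma continuous_integrand (A C B : Mat) (t : ℝ) (k : ℕ) :
    Continuous fun s : Fin k → ℝ =>
      NormedSpace.exp ((t - ∑ i, s i) • C) * lp A B k s := by
  refine Continuous.mul ?_ (continuous_lp A B k)
  exact exp_continuous'.comp
    ((continuous_const.sub (by fun_prop : Continuous fun s : Fin k → ℝ => ∑ i, s i)).smul
      continuous_const)


lemma sum_snoc {k : ℕ} (s : Fin k → ℝ) (u : ℝ) :
    ∑ i : Fin (k + 1), Fin.snoc s u i = (∑ i : Fin k, s i) + u := by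
  rw [Fin.sum_univ_castSucc]
  simp [Fin.snoc_castSucc, Fin.snoc_last]


lemma rec_step (A B : Mat) (t : ℝ) (k : ℕ) :
    (∫ s in Spx k t, NormedSpace.exp ((t - ∑ i, s i) • (A + B)) * lp A B k s) =
      (∫ s in Spx k t, NormedSpace.exp ((t - ∑ i, s i) • A) * lp A B k s) +
        ∫ s in Spx (k + 1) t, NormedSpace.exp ((t - ∑ i, s i) • (A + B)) * lp A B (k + 1) s := by
  have hintR : IntegrableOn
      (fun s : Fin k → ℝ => NormedSpace.exp ((t - ∑ i, s i) • (A + B)) * lp A B k s)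
      (Spx k t) :=
    (continuous_integrand A (A + B) B t k).continuousOn.integrableOn_compact (isCompact_Spx k t)
  have hintT : IntegrableOn
      (fun s : Fin k → ℝ => NormedSpace.exp ((t - ∑ i, s i) • A) * lp A B k s)
      (Spx k t) :=
    (continuous_integrand A A B t k).continuousOn.integrableOn_compact (isCompact_Spx k t)
  have key : (∫ s in Spx (k + 1) t,
      NormedSpace.exp ((t - ∑ i, s i) • (A + B)) * lp A B (k + 1) s) =
      ∫ s in Spx k t,
        (NormedSpace.exp ((t - ∑ i, s i) • (A + B)) * lp A B k s -
          NormedSpace.exp ((t - ∑ i, s i) • A) * lp A B k s) := by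
    rw [split_inner k t _ (continuous_integrand A (A + B) B t (k + 1))]
    refine setIntegral_congr_fun (measurableSet_Spx k t) fun s hs => ?_
    set τ := t - ∑ i, s i with hτdef
    have hτ : 0 ≤ τ := sub_nonneg.2 hs.2
    have hinner : ∀ u : ℝ,
        NormedSpace.exp ((t - ∑ i, Fin.snoc s u i) • (A + B)) * lp A B (k + 1) (Fin.snoc s u) =
          (NormedSpace.exp ((τ - u) • (A + B)) * (B * NormedSpace.exp (u • A))) *
            lp A B k s := by
      intro u
      rw [lp_snoc, sum_snoc]
      have h1 : t - ((∑ i, s i) + u) = τ - u := by rw [hτdef]; ring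
      rw [h1, mul_assoc, mul_assoc, mul_assoc]
    calc (∫ u in Set.Icc 0 τ,
          NormedSpace.exp ((t - ∑ i, Fin.snoc s u i) • (A + B)) * lp A B (k + 1) (Fin.snoc s u))
        = ∫ u in Set.Icc 0 τ,
            (NormedSpace.exp ((τ - u) • (A + B)) * (B * NormedSpace.exp (u • A))) *
              lp A B k s := by
          exact integral_congr_ae (Filter.Eventually.of_forall fun u => hinner u)
      _ = (∫ u in Set.Icc 0 τ,
            NormedSpace.exp ((τ - u) • (A + B)) * (B * NormedSpace.exp (u • A))) *
              lp A B k s := by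
          have hint : IntegrableOn
              (fun u : ℝ => NormedSpace.exp ((τ - u) • (A + B)) *
                (B * NormedSpace.exp (u • A))) (Set.Icc 0 τ) := by
            refine Continuous.integrableOn_Icc ?_
            refine Continuous.mul ?_ (continuous_const.mul ?_)
            · exact exp_continuous'.comp
                ((continuous_const.sub continuous_id).smul continuous_const)
            · exact exp_continuous'.comp (continuous_id.smul continuous_const)
          exact ((ContinuousLinearMap.mul ℝ Mat).flip (lp A B k s)).integral_comp_comm hint
      _ = (NormedSpace.exp (τ • (A + B)) - NormedSpace.exp (τ • A)) * lp A B k s := by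
          rw [duhamel A B τ hτ]
      _ = _ := by rw [sub_mul]
  rw [key, integral_sub hintR hintT]
  abel


lemma norm_lp_le (A B : Mat) (k : ℕ) (hk : 1 ≤ k) (s : Fin k → ℝ) (hs : ∀ i, 0 ≤ s i) :
    ‖lp A B k s‖ ≤ ∏ i : Fin k, (‖B‖ * Real.exp (s i * ‖A‖)) := by
  set l := List.ofFn fun i : Fin k => B * NormedSpace.exp (s i • A) with hl
  have hne : l.reverse ≠ [] := by
    have hlen : l.reverse.length = k := by simp [hl]
    intro h
    rw [h] at hlen
    simp at hlen
    omega
  calc ‖l.reverse.prod‖ ≤ (l.reverse.map norm).prod := List.norm_prod_le' hne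
    _ = (l.map norm).prod := by rw [List.map_reverse, List.prod_reverse]
    _ = ∏ i : Fin k, ‖B * NormedSpace.exp (s i • A)‖ := by
        rw [hl, List.map_ofFn, List.prod_ofFn]; rfl
    _ ≤ ∏ i : Fin k, (‖B‖ * Real.exp (s i * ‖A‖)) := by
        refine Finset.prod_le_prod (fun i _ => norm_nonneg _) fun i _ => ?_
        refine le_trans (norm_mul_le _ _) (mul_le_mul_of_nonneg_left ?_ (norm_nonneg B))
        refine le_trans (norm_exp_le _) ?_
        rw [norm_smul, Real.norm_of_nonneg (hs i)]

lemma remainder_bound (A B : Mat) (t : ℝ) (ht : 0 ≤ t) (k : ℕ) (hk : 1 ≤ k) :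
    ‖∫ s in Spx k t, NormedSpace.exp ((t - ∑ i, s i) • (A + B)) * lp A B k s‖ ≤
      t ^ k / (Nat.factorial k) * ‖B‖ ^ k * Real.exp (t * (‖A‖ + ‖B‖)) := by
  set C : ℝ := ‖B‖ ^ k * Real.exp (t * (‖A‖ + ‖B‖)) with hC
  have hpoint : ∀ s ∈ Spx k t,
      ‖NormedSpace.exp ((t - ∑ i, s i) • (A + B)) * lp A B k s‖ ≤ C := by
    rintro s ⟨hs0, hsle⟩
    have hSig : 0 ≤ ∑ i, s i := Finset.sum_nonneg fun i _ => hs0 i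
    have h1 : ‖NormedSpace.exp ((t - ∑ i, s i) • (A + B))‖ ≤
        Real.exp ((t - ∑ i, s i) * (‖A‖ + ‖B‖)) := by
      refine le_trans (norm_exp_le _) (Real.exp_le_exp.2 ?_)
      rw [norm_smul, Real.norm_of_nonneg (by linarith)]
      exact mul_le_mul_of_nonneg_left (norm_add_le A B) (by linarith)
    have h2 : ‖lp A B k s‖ ≤ ‖B‖ ^ k * Real.exp ((∑ i, s i) * ‖A‖) := by
      refine le_trans (norm_lp_le A B k hk s hs0) ?_
      rw [Finset.prod_mul_distrib, Finset.prod_const, Finset.card_univ, Fintype.card_fin,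
        ← Real.exp_sum, ← Finset.sum_mul]
    calc ‖NormedSpace.exp ((t - ∑ i, s i) • (A + B)) * lp A B k s‖
        ≤ ‖NormedSpace.exp ((t - ∑ i, s i) • (A + B))‖ * ‖lp A B k s‖ := norm_mul_le _ _
      _ ≤ Real.exp ((t - ∑ i, s i) * (‖A‖ + ‖B‖)) * (‖B‖ ^ k * Real.exp ((∑ i, s i) * ‖A‖)) :=
          mul_le_mul h1 h2 (norm_nonneg _) (Real.exp_nonneg _)
      _ ≤ C := by
          rw [hC, mul_comm (Real.exp _), mul_assoc, ← Real.exp_add]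
          refine mul_le_mul_of_nonneg_left (Real.exp_le_exp.2 ?_) (by positivity)
          have hB : 0 ≤ ‖B‖ := norm_nonneg _
          nlinarith [mul_nonneg hSig hB]
  have hcont := continuous_integrand A (A + B) B t k
  have hintR : IntegrableOn
      (fun s : Fin k → ℝ => NormedSpace.exp ((t - ∑ i, s i) • (A + B)) * lp A B k s)
      (Spx k t) := hcont.continuousOn.integrableOn_compact (isCompact_Spx k t)
  have hvol : ((volume (Spx k t)).toReal) = t ^ k / k.factorial := by
    have := J_eq k t ht
    rwa [setIntegral_const, smul_eq_mul, mul_one] at this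
  calc ‖∫ s in Spx k t, NormedSpace.exp ((t - ∑ i, s i) • (A + B)) * lp A B k s‖
      ≤ ∫ s in Spx k t, ‖NormedSpace.exp ((t - ∑ i, s i) • (A + B)) * lp A B k s‖ :=
        norm_integral_le_integral_norm _
    _ ≤ ∫ _ in Spx k t, C := by
        refine setIntegral_mono_on hintR.norm ?_ (measurableSet_Spx k t) hpoint
        exact integrableOn_const ((isCompact_Spx k t).measure_lt_top.ne)
    _ = (volume (Spx k t)).toReal • C := setIntegral_const C
    _ = t ^ k / (Nat.factorial k) * ‖B‖ ^ k * Real.exp (t * (‖A‖ + ‖B‖)) := by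
        rw [hvol, smul_eq_mul, hC, mul_assoc]

lemma remainder_zero (A B : Mat) (t : ℝ) (ht : 0 ≤ t) :
    (∫ s in Spx 0 t, NormedSpace.exp ((t - ∑ i, s i) • (A + B)) * lp A B 0 s) =
      NormedSpace.exp (t • (A + B)) := by
  have huniv : Spx 0 t = Set.univ := by ext s; simp [Spx, ht]
  have hint : ∀ s : Fin 0 → ℝ,
      NormedSpace.exp ((t - ∑ i, s i) • (A + B)) * lp A B 0 s =
        NormedSpace.exp (t • (A + B)) := by
    intro s
    simp [lp]
  rw [huniv, setIntegral_univ]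
  rw [integral_congr_ae (Filter.Eventually.of_forall hint), integral_const]
  have : (volume : Measure (Fin 0 → ℝ)) Set.univ = 1 := by
    rw [MeasureTheory.volume_pi, MeasureTheory.Measure.pi_univ]
    simp
  rw [Measure.real, this]
  simp


lemma dysonRemainder_def (A B : Mat) (t : ℝ) (k : ℕ) :
    dysonRemainder A B t k =
      ∫ s in Spx k t, NormedSpace.exp ((t - ∑ i, s i) • (A + B)) * lp A B k s := rfl

lemma dysonTerm_def (A B : Mat) (t : ℝ) (k : ℕ) :
    dysonTerm A B t k =
      ∫ s in Spx k t, NormedSpace.exp ((t - ∑ i, s i) • A) * lp A B k s := rfl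

lemma expansion (A B : Mat) (t : ℝ) (ht : 0 ≤ t) (k : ℕ) :
    NormedSpace.exp (t • (A + B)) =
      (∑ m ∈ Finset.range k, dysonTerm A B t m) + dysonRemainder A B t k := by
  induction k with
  | zero =>
    rw [Finset.range_zero, Finset.sum_empty, zero_add, dysonRemainder_def,
      remainder_zero A B t ht]
  | succ k ih =>
    have hstep : dysonRemainder A B t k = dysonTerm A B t k + dysonRemainder A B t (k + 1) := by
      rw [dysonRemainder_def, dysonTerm_def, dysonRemainder_def]
      exact rec_step A B t k
    rw [Finset.sum_range_succ, ih, hstep]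
    abel

end DysonProof

theorem stmt_6 {n : ℕ} (A B : Matrix (Fin n) (Fin n) ℂ) (t : ℝ) (ht : 0 ≤ t)
    (k : ℕ) (hk : 1 ≤ k) :
    NormedSpace.exp (t • (A + B)) =
        (∑ m ∈ Finset.range k, dysonTerm A B t m) + dysonRemainder A B t k ∧
      ‖dysonRemainder A B t k‖ ≤
        t ^ k / (Nat.factorial k) * ‖B‖ ^ k * Real.exp (t * (‖A‖ + ‖B‖)) := by
  constructor
  · exact DysonProof.expansion A B t ht k
  · rw [DysonProof.dysonRemainder_def]
    exact DysonProof.remainder_bound A B t ht k hk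
end

section
/- For n×n complex matrices A and B and t ≥ 0, exp(t(A+B)) = ∑_{m=0}^∞ ∫_{t_0,…,t_m ≥ 0, t_0+⋯+t_m=t} exp(t_m A) B ⋯ exp(t_1 A) B exp(t_0 A) dt_0⋯dt_{m-1}, the series converging absolutely in operator norm. -/
open scoped Matrix.Norms.L2Operator

open NormedSpace MeasureTheory

namespace Dyson
variable {n : ℕ}

noncomputable instance instNormedAlgebraRatMatrix : NormedAlgebra ℚ (Matrix (Fin n) (Fin n) ℂ) :=
  NormedAlgebra.restrictScalars ℚ ℂ _

noncomputable def cc (n : ℕ) : ℝ := ‖(1 : Matrix (Fin n) (Fin n) ℂ)‖ + 1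

lemma one_le_cc : 1 ≤ cc n := by
  have := norm_nonneg (1 : Matrix (Fin n) (Fin n) ℂ); unfold cc; linarith

lemma cc_pos : (0:ℝ) < cc n := lt_of_lt_of_le one_pos one_le_cc

lemma norm_exp_le (x : Matrix (Fin n) (Fin n) ℂ) :
    ‖exp x‖ ≤ cc n * Real.exp ‖x‖ := by
  rw [exp_eq_tsum ℂ]
  refine (norm_tsum_le_tsum_norm (norm_expSeries_summable' x)).trans ?_
  have h1 : ∀ k : ℕ, ‖(k.factorial⁻¹ : ℂ) • x ^ k‖ ≤ cc n * (‖x‖ ^ k / k.factorial) := by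
    intro k
    rw [norm_smul]
    rcases Nat.eq_zero_or_pos k with hk | hk
    · subst hk; simp [cc]
    · have h2 : ‖x ^ k‖ ≤ ‖x‖ ^ k := norm_pow_le' x hk
      have h3 : ‖((k.factorial : ℂ))⁻¹‖ = (k.factorial : ℝ)⁻¹ := by
        rw [norm_inv, Complex.norm_natCast]
      rw [h3, div_eq_inv_mul, ← mul_assoc, mul_comm (cc n) _, mul_assoc]
      have h4 : (0:ℝ) ≤ ((k.factorial : ℝ))⁻¹ := by positivity
      refine mul_le_mul_of_nonneg_left ?_ h4
      calc ‖x ^ k‖ ≤ ‖x‖ ^ k := h2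
        _ ≤ cc n * ‖x‖ ^ k := le_mul_of_one_le_left (by positivity) one_le_cc
  refine (Summable.tsum_le_tsum h1 (norm_expSeries_summable' x) ?_).trans_eq ?_
  · exact (Real.summable_pow_div_factorial ‖x‖).mul_left _
  · rw [tsum_mul_left, Real.exp_eq_exp_ℝ, exp_eq_tsum_div]

lemma norm_exp_smul_le (x : Matrix (Fin n) (Fin n) ℂ) (u : ℝ) :
    ‖exp (u • x)‖ ≤ cc n * Real.exp (|u| * ‖x‖) := by
  refine (norm_exp_le _).trans ?_
  have : ‖u • x‖ = |u| * ‖x‖ := by rw [norm_smul, Real.norm_eq_abs]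
  rw [this]



/-- the simplex -/
def Δ (m : ℕ) (t : ℝ) : Set (Fin m → ℝ) := {s | (∀ i, 0 ≤ s i) ∧ ∑ i, s i ≤ t}

lemma isClosed_Δ (m : ℕ) (t : ℝ) : IsClosed (Δ m t) := by
  have h1 : IsClosed {s : Fin m → ℝ | ∀ i, 0 ≤ s i} := by
    have : {s : Fin m → ℝ | ∀ i, 0 ≤ s i} = ⋂ i, {s | 0 ≤ s i} := by ext; simp
    rw [this]
    exact isClosed_iInter fun i => isClosed_le continuous_const (continuous_apply i)
  have h2 : IsClosed {s : Fin m → ℝ | ∑ i, s i ≤ t} :=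
    isClosed_le (by continuity) continuous_const
  exact h1.inter h2

lemma Δ_subset_pi (m : ℕ) (t : ℝ) : Δ m t ⊆ Set.pi Set.univ (fun _ : Fin m => Set.Icc 0 t) := by
  rintro s ⟨h1, h2⟩ i _
  refine ⟨h1 i, ?_⟩
  calc s i ≤ ∑ j, s j := Finset.single_le_sum (fun j _ => h1 j) (Finset.mem_univ i)
    _ ≤ t := h2

lemma isCompact_Δ (m : ℕ) (t : ℝ) : IsCompact (Δ m t) :=
  (isCompact_univ_pi fun _ => isCompact_Icc).of_isClosed_subset (isClosed_Δ m t)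
    (Δ_subset_pi m t)

lemma measurableSet_Δ (m : ℕ) (t : ℝ) : MeasurableSet (Δ m t) :=
  (isClosed_Δ m t).measurableSet

lemma Δ_empty {m : ℕ} {t : ℝ} (ht : t < 0) : Δ m t = ∅ := by
  ext s
  simp only [Δ, Set.mem_setOf_eq, Set.mem_empty_iff_false, iff_false, not_and]
  intro h1 h2
  have : (0:ℝ) ≤ ∑ i, s i := Finset.sum_nonneg fun i _ => h1 i
  linarith

/-- the product of the list -/
noncomputable def lprod (A B : Matrix (Fin n) (Fin n) ℂ) {m : ℕ} (s : Fin m → ℝ) :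
    Matrix (Fin n) (Fin n) ℂ :=
  (List.ofFn fun i : Fin m => B * exp (s i • A)).reverse.prod

lemma lprod_zero (A B : Matrix (Fin n) (Fin n) ℂ) (s : Fin 0 → ℝ) : lprod A B s = 1 := by
  simp [lprod]

lemma lprod_succ (A B : Matrix (Fin n) (Fin n) ℂ) {m : ℕ} (s : Fin (m+1) → ℝ) :
    lprod A B s = lprod A B (fun i => s i.succ) * (B * exp (s 0 • A)) := by
  rw [lprod, List.ofFn_succ, List.reverse_cons, List.prod_append]
  simp [lprod]

lemma continuous_lprod (A B : Matrix (Fin n) (Fin n) ℂ) (m : ℕ) :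
    Continuous fun s : Fin m → ℝ => lprod A B s := by
  induction m with
  | zero => simpa [lprod_zero] using continuous_const
  | succ m ih =>
    have : (fun s : Fin (m+1) → ℝ => lprod A B s) =
        fun s => lprod A B (fun i => s i.succ) * (B * exp (s 0 • A)) := by
      ext1 s; exact lprod_succ A B s
    rw [this]
    refine Continuous.mul (ih.comp (by continuity)) ?_
    exact continuous_const.mul (exp_continuous.comp ((continuous_apply _).smul continuous_const))

/-- generalized Dyson term -/
noncomputable def gTerm (P A B : Matrix (Fin n) (Fin n) ℂ) (t : ℝ) (m : ℕ) :
    Matrix (Fin n) (Fin n) ℂ :=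
  ∫ s in Δ m t, exp ((t - ∑ i, s i) • P) * lprod A B s

lemma continuous_gIntegrand (P A B : Matrix (Fin n) (Fin n) ℂ) (t : ℝ) (m : ℕ) :
    Continuous fun s : Fin m → ℝ => exp ((t - ∑ i, s i) • P) * lprod A B s := by
  refine Continuous.mul ?_ (continuous_lprod A B m)
  exact exp_continuous.comp (((continuous_const.sub (continuous_finset_sum _ fun i _ => continuous_apply i)).smul continuous_const))

lemma integrableOn_gIntegrand (P A B : Matrix (Fin n) (Fin n) ℂ) (t : ℝ) (m : ℕ) :
    IntegrableOn (fun s : Fin m → ℝ => exp ((t - ∑ i, s i) • P) * lprod A B s) (Δ m t) := by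
  exact (continuous_gIntegrand P A B t m).continuousOn.integrableOn_compact (isCompact_Δ m t)

lemma gTerm_neg (P A B : Matrix (Fin n) (Fin n) ℂ) {t : ℝ} (ht : t < 0) (m : ℕ) :
    gTerm P A B t m = 0 := by
  rw [gTerm, Δ_empty ht, Measure.restrict_empty, integral_zero_measure]

lemma gTerm_zero (P A B : Matrix (Fin n) (Fin n) ℂ) {t : ℝ} (ht : 0 ≤ t) :
    gTerm P A B t 0 = exp (t • P) := by
  have h1 : Δ 0 t = Set.univ := by
    ext s
    simp [Δ, ht, Finset.sum_empty, Fin.forall_fin_zero_pi]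
  rw [gTerm, h1, Measure.restrict_univ]
  have h2 : ∀ s : Fin 0 → ℝ, exp ((t - ∑ i, s i) • P) * lprod A B s = exp (t • P) := by
    intro s
    simp [lprod_zero]
  rw [integral_congr_ae (Filter.Eventually.of_forall h2), integral_const]
  have : (volume : Measure (Fin 0 → ℝ)) Set.univ = 1 := by
    simp [volume_pi, Measure.pi_univ]
  rw [Measure.real, this]
  simp


lemma integral_mul_const {α : Type*} [MeasurableSpace α] (μ : Measure α)
    (f : α → Matrix (Fin n) (Fin n) ℂ) (C : Matrix (Fin n) (Fin n) ℂ)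
    (hf : Integrable f μ) :
    ∫ x, f x * C ∂μ = (∫ x, f x ∂μ) * C := by
  have := (((ContinuousLinearMap.mul ℂ (Matrix (Fin n) (Fin n) ℂ)).flip C).integral_comp_comm hf)
  simpa using this

lemma cons_mem_iff {m : ℕ} {t u : ℝ} {v : Fin m → ℝ} :
    Fin.cons u v ∈ Δ (m+1) t ↔ 0 ≤ u ∧ v ∈ Δ m (t - u) := by
  simp only [Δ, Set.mem_setOf_eq, Fin.forall_fin_succ, Fin.cons_zero, Fin.cons_succ,
    Fin.sum_cons]
  constructor
  · rintro ⟨⟨h0, hs⟩, hsum⟩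
    exact ⟨h0, ⟨hs, by linarith⟩⟩
  · rintro ⟨h0, hs, hsum⟩
    exact ⟨⟨h0, hs⟩, by linarith⟩

lemma gTerm_succ_aux (P A B : Matrix (Fin n) (Fin n) ℂ) (t : ℝ) (m : ℕ) :
    gTerm P A B t (m+1) =
      (∫ u in Set.Icc (0:ℝ) t, gTerm P A B (t - u) m * (B * exp (u • A))) ∧
    IntegrableOn (fun u => gTerm P A B (t - u) m * (B * exp (u • A))) (Set.Icc (0:ℝ) t) := by
  classical
  set F : (Fin (m+1) → ℝ) → Matrix (Fin n) (Fin n) ℂ :=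
    fun s => exp ((t - ∑ i, s i) • P) * lprod A B s with hF
  have hint : Integrable ((Δ (m+1) t).indicator F) := by
    rw [integrable_indicator_iff (measurableSet_Δ (m+1) t)]
    exact integrableOn_gIntegrand P A B t (m+1)
  set e := MeasurableEquiv.piFinSuccAbove (fun _ : Fin (m+1) => ℝ) 0 with he
  have hmp : MeasurePreserving e.symm volume volume :=
    (volume_preserving_piFinSuccAbove (fun _ : Fin (m+1) => ℝ) 0).symm
  have hsymm : ∀ p : ℝ × (Fin m → ℝ), e.symm p = Fin.cons p.1 p.2 := by
    intro p
    rw [MeasurableEquiv.piFinSuccAbove_symm_apply]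
    exact Fin.insertNth_zero' p.1 p.2
  have step1 : gTerm P A B t (m+1) = ∫ p : ℝ × (Fin m → ℝ), (Δ (m+1) t).indicator F (Fin.cons p.1 p.2) := by
    rw [gTerm, ← integral_indicator (measurableSet_Δ (m+1) t),
      ← hmp.integral_comp e.symm.measurableEmbedding]
    refine integral_congr_ae (Filter.Eventually.of_forall fun p => ?_)
    simp only [hsymm]
    rfl
  have hval : ∀ (u : ℝ) (v : Fin m → ℝ), F (Fin.cons u v) =
      exp (((t - u) - ∑ i, v i) • P) * lprod A B v * (B * exp (u • A)) := by
    intro u v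
    simp only [hF, Fin.sum_cons]
    rw [lprod_succ]
    have h1 : (fun i : Fin m => (Fin.cons u v : Fin (m+1) → ℝ) i.succ) = v := by ext i; simp
    rw [Fin.cons_zero, h1]
    have h2 : t - (u + ∑ i, v i) = t - u - ∑ i, v i := by ring
    rw [h2, mul_assoc]
  have step2 : ∀ p : ℝ × (Fin m → ℝ), (Δ (m+1) t).indicator F (Fin.cons p.1 p.2) =
      Set.indicator (Set.Ici (0:ℝ))
        (fun u => (Δ m (t - u)).indicator
          (fun v => exp (((t - u) - ∑ i, v i) • P) * lprod A B v * (B * exp (u • A))) p.2) p.1 := by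
    rintro ⟨u, v⟩
    by_cases hu : (0:ℝ) ≤ u
    · by_cases hv : v ∈ Δ m (t - u)
      · rw [Set.indicator_of_mem (cons_mem_iff.2 ⟨hu, hv⟩), Set.indicator_of_mem (Set.mem_Ici.2 hu),
          Set.indicator_of_mem hv]
        exact hval u v
      · rw [Set.indicator_of_notMem (fun h => hv (cons_mem_iff.1 h).2),
          Set.indicator_of_mem (Set.mem_Ici.2 hu), Set.indicator_of_notMem hv]
    · rw [Set.indicator_of_notMem (fun h => hu (cons_mem_iff.1 h).1),
        Set.indicator_of_notMem (fun h => hu (Set.mem_Ici.1 h))]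
  rw [step1, integral_congr_ae (Filter.Eventually.of_forall step2)]
  set f : ℝ × (Fin m → ℝ) → Matrix (Fin n) (Fin n) ℂ := fun p =>
    Set.indicator (Set.Ici (0:ℝ))
      (fun u => (Δ m (t - u)).indicator
        (fun v => exp (((t - u) - ∑ i, v i) • P) * lprod A B v * (B * exp (u • A))) p.2) p.1
    with hf
  have hfint : Integrable f (volume.prod volume) := by
    have h1 : Integrable (((Δ (m+1) t).indicator F) ∘ e.symm) volume :=
      (hmp.integrable_comp_emb e.symm.measurableEmbedding).2 hint
    have h2 : ((Δ (m+1) t).indicator F) ∘ e.symm = f := by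
      funext p
      show (Δ (m+1) t).indicator F (e.symm p) = f p
      rw [hsymm p, step2 p]
    rw [← Measure.volume_eq_prod, ← h2]
    exact h1
  rw [show (volume : Measure (ℝ × (Fin m → ℝ))) = volume.prod volume from Measure.volume_eq_prod ℝ (Fin m → ℝ),
    integral_prod f hfint]
  have inner : ∀ u : ℝ, (∫ v, f (u, v)) =
      Set.indicator (Set.Ici (0:ℝ))
        (fun u => gTerm P A B (t - u) m * (B * exp (u • A))) u := by
    intro u
    by_cases hu : (0:ℝ) ≤ u
    · rw [Set.indicator_of_mem (Set.mem_Ici.2 hu)]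
      simp only [hf, Set.indicator_of_mem (Set.mem_Ici.2 hu)]
      rw [integral_indicator (measurableSet_Δ m (t - u)),
        integral_mul_const _ _ _ (integrableOn_gIntegrand P A B (t - u) m), gTerm]
    · rw [Set.indicator_of_notMem (fun h => hu (Set.mem_Ici.1 h))]
      simp only [hf, Set.indicator_of_notMem (fun h => hu (Set.mem_Ici.1 h))]
      exact integral_zero _ _
  rw [integral_congr_ae (Filter.Eventually.of_forall inner)]
  have key : Set.indicator (Set.Ici (0:ℝ))
      (fun u => gTerm P A B (t - u) m * (B * exp (u • A))) =
      Set.indicator (Set.Icc (0:ℝ) t)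
        (fun u => gTerm P A B (t - u) m * (B * exp (u • A))) := by
    funext u
    by_cases hu : (0:ℝ) ≤ u
    · by_cases hut : u ≤ t
      · rw [Set.indicator_of_mem (Set.mem_Ici.2 hu),
          Set.indicator_of_mem (Set.mem_Icc.2 ⟨hu, hut⟩)]
      · rw [Set.indicator_of_mem (Set.mem_Ici.2 hu),
          Set.indicator_of_notMem (fun h => hut (Set.mem_Icc.1 h).2),
          gTerm_neg P A B (by linarith : t - u < 0) m, zero_mul]
    · rw [Set.indicator_of_notMem (fun h => hu (Set.mem_Ici.1 h)),
        Set.indicator_of_notMem (fun h => hu (Set.mem_Icc.1 h).1)]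
  have hii : Integrable (fun u => ∫ v, f (u, v)) volume := hfint.integral_prod_left
  have heq : (fun u => ∫ v, f (u, v)) = Set.indicator (Set.Icc (0:ℝ) t)
      (fun u => gTerm P A B (t - u) m * (B * exp (u • A))) := by
    funext u
    rw [inner u]
    exact congrFun key u
  constructor
  · rw [key, integral_indicator measurableSet_Icc]
  · rw [heq] at hii
    exact (integrable_indicator_iff measurableSet_Icc).1 hii

lemma gTerm_succ (P A B : Matrix (Fin n) (Fin n) ℂ) (t : ℝ) (m : ℕ) :
    gTerm P A B t (m+1) =
      ∫ u in Set.Icc (0:ℝ) t, gTerm P A B (t - u) m * (B * exp (u • A)) :=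
  (gTerm_succ_aux P A B t m).1

lemma integrableOn_gTerm_mul (P A B : Matrix (Fin n) (Fin n) ℂ) (t : ℝ) (m : ℕ) :
    IntegrableOn (fun u => gTerm P A B (t - u) m * (B * exp (u • A))) (Set.Icc (0:ℝ) t) :=
  (gTerm_succ_aux P A B t m).2

lemma duhamel (A B : Matrix (Fin n) (Fin n) ℂ) {t : ℝ} (ht : 0 ≤ t) :
    exp (t • (A + B)) = exp (t • A) +
      ∫ u in Set.Icc (0:ℝ) t, exp ((t - u) • (A + B)) * (B * exp (u • A)) := by
  set Q := A + B with hQ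
  set F : ℝ → Matrix (Fin n) (Fin n) ℂ := fun u => exp ((t - u) • Q) * exp (u • A) with hFdef
  set F' : ℝ → Matrix (Fin n) (Fin n) ℂ :=
    fun u => -(exp ((t - u) • Q) * (B * exp (u • A))) with hF'def
  have hderiv : ∀ u : ℝ, HasDerivAt F (F' u) u := by
    intro u
    have h1 : HasDerivAt (fun u : ℝ => exp ((t - u) • Q))
        ((-1 : ℝ) • (exp ((t - u) • Q) * Q)) u := by
      have hg : HasDerivAt (fun u : ℝ => t - u) (-1) u := by
        simpa using (hasDerivAt_id u).const_sub t
      have hexp : HasDerivAt (fun w : ℝ => exp (w • Q)) (exp ((t - u) • Q) * Q) (t - u) := by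
        exact hasDerivAt_exp_smul_const Q (t - u)
      exact hexp.scomp u hg
    have h2 : HasDerivAt (fun u : ℝ => exp (u • A)) (A * exp (u • A)) u := by
      exact hasDerivAt_exp_smul_const' A u
    have h3 := h1.mul h2
    refine h3.congr_deriv ?_
    rw [hF'def, hQ]
    simp only [neg_one_smul, neg_mul]
    noncomm_ring
  have hcont : Continuous F' := by
    refine (Continuous.mul ?_ ?_).neg
    · exact exp_continuous.comp (((continuous_const.sub continuous_id).smul continuous_const))
    · exact continuous_const.mul (exp_continuous.comp ((continuous_id.smul continuous_const)))
  have hftc : ∫ u in (0:ℝ)..t, F' u = F t - F 0 :=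
    intervalIntegral.integral_eq_sub_of_hasDerivAt (fun u _ => hderiv u)
      (hcont.intervalIntegrable 0 t)
  have hFt : F t = exp (t • A) := by
    simp [hFdef]
  have hF0 : F 0 = exp (t • Q) := by
    simp [hFdef]
  rw [hFt, hF0] at hftc
  have h5 : ∫ u in (0:ℝ)..t, F' u =
      -∫ u in Set.Icc (0:ℝ) t, exp ((t - u) • Q) * (B * exp (u • A)) := by
    rw [intervalIntegral.integral_of_le ht, ← integral_Icc_eq_integral_Ioc]
    rw [hF'def]
    exact integral_neg _
  rw [h5] at hftc
  have h6 := congrArg Neg.neg hftc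
  simp only [neg_neg, neg_sub] at h6
  rw [h6]
  abel

lemma rem_step (A B : Matrix (Fin n) (Fin n) ℂ) :
    ∀ (M : ℕ) {t : ℝ}, 0 ≤ t →
      gTerm (A+B) A B t M = gTerm A A B t M + gTerm (A+B) A B t (M+1) := by
  intro M
  induction M with
  | zero =>
    intro t ht
    rw [gTerm_zero _ _ _ ht, gTerm_zero _ _ _ ht, gTerm_succ]
    have h1 : ∀ u ∈ Set.Icc (0:ℝ) t,
        gTerm (A+B) A B (t - u) 0 * (B * exp (u • A)) =
          exp ((t - u) • (A+B)) * (B * exp (u • A)) := by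
      intro u hu
      rw [gTerm_zero _ _ _ (by linarith [hu.2] : (0:ℝ) ≤ t - u)]
    rw [setIntegral_congr_fun measurableSet_Icc h1]
    exact duhamel A B ht
  | succ M ih =>
    intro t ht
    rw [gTerm_succ (A+B) A B t M, gTerm_succ A A B t M, gTerm_succ (A+B) A B t (M+1)]
    rw [← integral_add (integrableOn_gTerm_mul A A B t M)
      (integrableOn_gTerm_mul (A+B) A B t (M+1))]
    refine setIntegral_congr_fun measurableSet_Icc fun u hu => ?_
    rw [ih (by linarith [hu.2] : (0:ℝ) ≤ t - u), add_mul]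

lemma expansion (A B : Matrix (Fin n) (Fin n) ℂ) {t : ℝ} (ht : 0 ≤ t) (M : ℕ) :
    exp (t • (A + B)) =
      (∑ m ∈ Finset.range M, gTerm A A B t m) + gTerm (A+B) A B t M := by
  induction M with
  | zero => simp [gTerm_zero _ _ _ ht]
  | succ M ih =>
    rw [ih, Finset.sum_range_succ, rem_step A B M ht]
    abel

lemma gTerm_norm_le (P A B : Matrix (Fin n) (Fin n) ℂ) {t : ℝ} (ht : 0 ≤ t) :
    ∀ (m : ℕ) (u : ℝ), u ∈ Set.Icc (0:ℝ) t →
      ‖gTerm P A B u m‖ ≤ (cc n * Real.exp (t * ‖P‖)) *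
        (cc n * Real.exp (t * ‖A‖) * ‖B‖) ^ m * u ^ m / m.factorial := by
  intro m
  induction m with
  | zero =>
    intro u hu
    rw [gTerm_zero _ _ _ hu.1]
    simp only [pow_zero, mul_one, Nat.factorial_zero, Nat.cast_one, div_one]
    refine (norm_exp_smul_le P u).trans ?_
    have h1 : |u| * ‖P‖ ≤ t * ‖P‖ := by
      rw [abs_of_nonneg hu.1]
      exact mul_le_mul_of_nonneg_right hu.2 (norm_nonneg _)
    exact mul_le_mul_of_nonneg_left (Real.exp_le_exp.2 h1) (le_of_lt cc_pos)
  | succ m ih =>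
    intro u hu
    rw [gTerm_succ]
    set CP := cc n * Real.exp (t * ‖P‖) with hCP
    set CA := cc n * Real.exp (t * ‖A‖) with hCA
    have hCP0 : 0 ≤ CP := mul_nonneg cc_pos.le (Real.exp_nonneg _)
    have hCA0 : 0 ≤ CA := mul_nonneg cc_pos.le (Real.exp_nonneg _)
    set K := CP * (CA * ‖B‖) ^ m / m.factorial * (‖B‖ * CA) with hK
    have hK0 : 0 ≤ K :=
      mul_nonneg (div_nonneg (mul_nonneg hCP0 (pow_nonneg (mul_nonneg hCA0 (norm_nonneg _)) m))
        (Nat.cast_nonneg _)) (mul_nonneg (norm_nonneg _) hCA0)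
    have hbound : ∀ v ∈ Set.Icc (0:ℝ) u,
        ‖gTerm P A B (u - v) m * (B * exp (v • A))‖ ≤ K * (u - v) ^ m := by
      intro v hv
      have huv : u - v ∈ Set.Icc (0:ℝ) t := ⟨by linarith [hv.2], by linarith [hv.1, hu.2]⟩
      have h2 : ‖exp (v • A)‖ ≤ CA := by
        refine (norm_exp_smul_le A v).trans ?_
        rw [hCA]
        refine mul_le_mul_of_nonneg_left (Real.exp_le_exp.2 ?_) (le_of_lt cc_pos)
        rw [abs_of_nonneg hv.1]
        exact mul_le_mul_of_nonneg_right (hv.2.trans hu.2) (norm_nonneg _)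
      calc ‖gTerm P A B (u - v) m * (B * exp (v • A))‖
          ≤ ‖gTerm P A B (u - v) m‖ * ‖B * exp (v • A)‖ := norm_mul_le _ _
        _ ≤ (CP * (CA * ‖B‖) ^ m * (u - v) ^ m / m.factorial) * (‖B‖ * CA) := by
            refine mul_le_mul (ih (u - v) huv) ((norm_mul_le _ _).trans ?_)
              (norm_nonneg _) (div_nonneg (mul_nonneg (mul_nonneg hCP0
                (pow_nonneg (mul_nonneg hCA0 (norm_nonneg _)) m))
                (pow_nonneg (by linarith [hv.2] : (0:ℝ) ≤ u - v) m)) (Nat.cast_nonneg _))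
            exact mul_le_mul_of_nonneg_left h2 (norm_nonneg _)
        _ = K * (u - v) ^ m := by rw [hK]; ring
    have hbint : IntegrableOn (fun v => K * (u - v) ^ m) (Set.Icc (0:ℝ) u) := by
      refine ContinuousOn.integrableOn_compact isCompact_Icc ?_
      exact (Continuous.mul continuous_const
        ((continuous_const.sub continuous_id).pow m)).continuousOn
    have h3 : ‖∫ v in Set.Icc (0:ℝ) u, gTerm P A B (u - v) m * (B * exp (v • A))‖ ≤
        ∫ v in Set.Icc (0:ℝ) u, K * (u - v) ^ m := by
      refine norm_integral_le_of_norm_le hbint ?_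
      exact (ae_restrict_iff' measurableSet_Icc).2 (Filter.Eventually.of_forall hbound)
    refine h3.trans ?_
    have h4 : ∫ v in Set.Icc (0:ℝ) u, K * (u - v) ^ m = K * (u ^ (m+1) / (m+1)) := by
      rw [integral_Icc_eq_integral_Ioc, ← intervalIntegral.integral_of_le hu.1,
        intervalIntegral.integral_const_mul]
      congr 1
      rw [intervalIntegral.integral_comp_sub_left (fun x => x ^ m) u]
      simp [integral_pow]
    rw [h4, hK]
    apply le_of_eq
    have hm1 : ((m:ℝ) + 1) ≠ 0 := by positivity
    have hmf : ((m.factorial : ℝ)) ≠ 0 := by exact_mod_cast m.factorial_pos.ne'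
    rw [Nat.factorial_succ, pow_succ]
    push_cast
    field_simp
    ring

lemma dysonTerm_eq_gTerm (A B : Matrix (Fin n) (Fin n) ℂ) (t : ℝ) (m : ℕ) :
    dysonTerm A B t m = gTerm A A B t m := rfl

end Dyson

set_option maxHeartbeats 1000000 in
theorem stmt_7 {n : ℕ} (A B : Matrix (Fin n) (Fin n) ℂ) (t : ℝ) (ht : 0 ≤ t) :
    HasSum (fun m : ℕ => dysonTerm A B t m) (NormedSpace.exp (t • (A + B))) ∧
      Summable (fun m : ℕ => ‖dysonTerm A B t m‖) := by
  classical
  set x : ℝ := Dyson.cc n * Real.exp (t * ‖A‖) * ‖B‖ * t with hx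
  have hb : ∀ (P : Matrix (Fin n) (Fin n) ℂ) (m : ℕ),
      ‖Dyson.gTerm P A B t m‖ ≤ (Dyson.cc n * Real.exp (t * ‖P‖)) * (x ^ m / m.factorial) := by
    intro P m
    have := Dyson.gTerm_norm_le P A B ht m t ⟨le_refl 0 |>.trans ht, le_refl t⟩
    refine this.trans (le_of_eq ?_)
    rw [hx, mul_pow, mul_div_assoc]
    ring
  have hsum : Summable (fun m : ℕ => ‖dysonTerm A B t m‖) := by
    refine Summable.of_nonneg_of_le (fun m => norm_nonneg _)
      (fun m => le_trans (le_of_eq (congrArg norm (Dyson.dysonTerm_eq_gTerm A B t m))) (hb A m)) ?_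
    exact (Real.summable_pow_div_factorial x).mul_left _
  have hsummf : Summable (fun m : ℕ => dysonTerm A B t m) := hsum.of_norm
  have hremten : Filter.Tendsto (fun M : ℕ => Dyson.gTerm (A+B) A B t M)
      Filter.atTop (nhds 0) := by
    refine squeeze_zero_norm (fun M => hb (A+B) M) ?_
    have h0 : Filter.Tendsto (fun M : ℕ => x ^ M / M.factorial) Filter.atTop (nhds 0) :=
      (Real.summable_pow_div_factorial x).tendsto_atTop_zero
    have := h0.const_mul (Dyson.cc n * Real.exp (t * ‖A+B‖))
    simpa using this
  have hten : Filter.Tendsto (fun M : ℕ => ∑ m ∈ Finset.range M, dysonTerm A B t m)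
      Filter.atTop (nhds (NormedSpace.exp (t • (A + B)))) := by
    have heq : ∀ M : ℕ, ∑ m ∈ Finset.range M, dysonTerm A B t m =
        NormedSpace.exp (t • (A + B)) - Dyson.gTerm (A+B) A B t M := by
      intro M
      have := Dyson.expansion A B ht M
      simp only [Dyson.dysonTerm_eq_gTerm]
      rw [eq_comm, sub_eq_iff_eq_add, ← this]
    rw [show (fun M : ℕ => ∑ m ∈ Finset.range M, dysonTerm A B t m) =
        fun M : ℕ => NormedSpace.exp (t • (A + B)) - Dyson.gTerm (A+B) A B t M from
      funext heq]
    have := Filter.Tendsto.const_sub (NormedSpace.exp (t • (A + B))) hremten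
    simpa using this
  have hs := hsummf.hasSum
  have huniq : ∑' m, dysonTerm A B t m = NormedSpace.exp (t • (A + B)) :=
    tendsto_nhds_unique hs.tendsto_sum_nat hten
  exact ⟨huniq ▸ hs, hsum⟩
end
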